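/- arXiv:1107.4641 — 2 statements merged into one kernel-verified Lean document; each statement's English description precedes it below -/
import Mathlib

section
/- Let A be an MV-algebra and I₁, ..., Iₙ ideals of A. If a₁, ..., aₙ ∈ A satisfy aᵢ ≡ aⱼ modulo the ideal generated by Iᵢ ∪ Iⱼ for all i, j, then there exists a ∈ A with a ≡ aᵢ (mod Iᵢ) for all i. (Chinese remainder theorem for MV-algebras.) -/
/-- An MV-algebra. -/
class MV (A : Type*) where
  add : A → A → A
  neg : A → A
  zero : A
  add_assoc : ∀ a b c, add (add a b) c = add a (add b c)
  add_comm : ∀ a b, add a b = add b a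
  add_zero : ∀ a, add a zero = a
  neg_neg : ∀ a, neg (neg a) = a
  add_neg_zero : ∀ a, add a (neg zero) = neg zero
  lukasiewicz : ∀ a b, add (neg (add (neg a) b)) b = add (neg (add (neg b) a)) a

namespace MV
variable {A : Type*} [MV A]
/-- a ⊖ b := ¬(¬a ⊕ b) -/
def sub (a b : A) : A := neg (add (neg a) b)
/-- a ∨ b := (a ⊖ b) ⊕ b -/
def sup (a b : A) : A := add (sub a b) b
/-- a ∧ b := ¬(¬a ∨ ¬b) -/
def inf (a b : A) : A := neg (sup (neg a) (neg b))
/-- a ≤ b iff a ⊖ b = 0 -/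
def le (a b : A) : Prop := sub a b = zero
/-- Ideal: contains 0, closed under ⊕, downward closed. -/
def IsIdeal (I : Set A) : Prop :=
  zero ∈ I ∧ (∀ a b : A, a ∈ I → b ∈ I → add a b ∈ I) ∧
    (∀ a b : A, b ∈ I → le a b → a ∈ I)
/-- Congruence modulo an ideal: x ≡ y (mod I) iff x ⊖ y ∈ I and y ⊖ x ∈ I. -/
def cong (I : Set A) (x y : A) : Prop := sub x y ∈ I ∧ sub y x ∈ I
/-- The ideal (I, J) generated by I ∪ J: elements bounded by c ⊕ d, c ∈ I, d ∈ J. -/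
def gen (I J : Set A) : Set A := {x | ∃ c ∈ I, ∃ d ∈ J, le x (add c d)}
end MV

/-! Induction on `n`. If `b'` solves the first `n` congruences, then `b' ≡ aₙ` modulo `(Iᵢ, Iₙ)`
for every `i < n`, hence modulo `⋂ᵢ (Iᵢ, Iₙ) = (⋂ᵢ Iᵢ, Iₙ)`; this distributivity holds because
`x ≤ u ⊕ w` and `x ≤ v ⊕ w` imply `x ≤ (u ∧ v) ⊕ w`. The case of two ideals then gives `b` with
`b ≡ b'` modulo `⋂ᵢ Iᵢ` and `b ≡ aₙ` modulo `Iₙ`: if `x ⊖ y` and `y ⊖ x` are at most `c ⊕ d`,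
then `(x ∧ (y ⊕ d)) ∨ (y ⊖ d)` (cut `x` down to `y ⊕ d`, then lift it to `y ⊖ d`) is within `c`
of `x` and within `d` of `y`. -/

namespace MV
variable {A : Type*} [MV A]

section Order

theorem zero_add (a : A) : add zero a = a := by rw [add_comm, add_zero]

theorem neg_zero_add (a : A) : add (neg zero) a = neg zero := by rw [add_comm, add_neg_zero]

theorem add_right_comm (a b c : A) : add (add a b) c = add (add a c) b := by
  rw [add_assoc, add_comm b c, ← add_assoc]

theorem add_add_add_comm (a b c d : A) : add (add a b) (add c d) = add (add a c) (add b d) := by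
  rw [← add_assoc, add_right_comm a b c, add_assoc]

theorem neg_add_self (a : A) : add (neg a) a = neg zero := by
  simpa only [add_neg_zero, neg_neg, zero_add] using (lukasiewicz a (neg zero)).symm

theorem sup_comm (a b : A) : sup a b = sup b a := lukasiewicz a b

theorem sup_eq_right_of_le {a b : A} (h : le a b) : sup a b = b := by
  rw [sup, show sub a b = zero from h, zero_add]

theorem le_iff_neg_add_eq {a b : A} : le a b ↔ add (neg a) b = neg zero := by
  rw [le, sub]
  exact ⟨fun h => by rw [← neg_neg (add (neg a) b), h], fun h => by rw [h, neg_neg]⟩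

theorem le_iff_exists_add {a b : A} : le a b ↔ ∃ c, b = add a c := by
  refine ⟨fun h => ⟨sub b a, ?_⟩, ?_⟩
  · calc b = sup a b := (sup_eq_right_of_le h).symm
      _ = sup b a := sup_comm a b
      _ = add a (sub b a) := add_comm _ _
  · rintro ⟨c, rfl⟩
    exact le_iff_neg_add_eq.2 (by rw [← add_assoc, neg_add_self, neg_zero_add])

instance : PartialOrder A where
  le := le
  le_refl a := le_iff_neg_add_eq.2 (neg_add_self a)
  le_trans a b c hab hbc := by
    obtain ⟨u, rfl⟩ := le_iff_exists_add.1 hab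
    obtain ⟨v, rfl⟩ := le_iff_exists_add.1 hbc
    exact le_iff_exists_add.2 ⟨add u v, add_assoc a u v⟩
  le_antisymm a b hab hba := by
    rw [← sup_eq_right_of_le hba, sup_comm, sup_eq_right_of_le hab]

theorem le_self_add (a c : A) : a ≤ add a c := le_iff_exists_add.2 ⟨c, rfl⟩

theorem le_add_self (a c : A) : a ≤ add c a := add_comm a c ▸ le_self_add a c

theorem zero_le (a : A) : zero ≤ a := le_iff_neg_add_eq.2 (neg_zero_add a)

theorem le_neg_zero (a : A) : a ≤ neg zero := le_iff_neg_add_eq.2 (add_neg_zero (neg a))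

theorem add_le_add_left {a b : A} (h : a ≤ b) (c : A) : add c a ≤ add c b := by
  obtain ⟨u, rfl⟩ := le_iff_exists_add.1 h
  exact le_iff_exists_add.2 ⟨u, (add_assoc c a u).symm⟩

theorem add_le_add_right {a b : A} (h : a ≤ b) (c : A) : add a c ≤ add b c := by
  simpa only [add_comm _ c] using add_le_add_left h c

theorem add_le_add {a b c d : A} (h₁ : a ≤ b) (h₂ : c ≤ d) : add a c ≤ add b d :=
  (add_le_add_right h₁ c).trans (add_le_add_left h₂ b)

theorem neg_le_neg {a b : A} (h : a ≤ b) : neg b ≤ neg a :=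
  le_iff_neg_add_eq.2 (by rw [neg_neg, add_comm]; exact le_iff_neg_add_eq.1 h)

theorem le_sub_add (a b : A) : a ≤ add (sub a b) b :=
  calc a ≤ add a (sub b a) := le_self_add a _
    _ = add (sub a b) b := by rw [add_comm]; exact sup_comm b a

theorem add_sub_le (a b : A) : sub (add a b) b ≤ a :=
  le_iff_neg_add_eq.2 (by rw [sub, neg_neg, add_assoc, add_comm b a, neg_add_self])

theorem sub_le_sub_right {a b : A} (h : a ≤ b) (c : A) : sub a c ≤ sub b c := by
  refine le_iff_neg_add_eq.2 (le_antisymm (le_neg_zero _) ?_)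
  calc neg zero = add (neg a) b := (le_iff_neg_add_eq.1 h).symm
    _ ≤ add (neg a) (add (sub b c) c) := add_le_add_left (le_sub_add b c) _
    _ = add (neg (sub a c)) (sub b c) := by
      rw [show neg (sub a c) = add (neg a) c from neg_neg _, add_comm (sub b c) c, add_assoc]

theorem sub_le_sub_left {a b : A} (h : a ≤ b) (c : A) : sub c b ≤ sub c a :=
  neg_le_neg (add_le_add_left h (neg c))

theorem sub_le_iff_le_add {a b c : A} : sub a b ≤ c ↔ a ≤ add c b :=
  ⟨fun h => (le_sub_add a b).trans (add_le_add_right h b),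
    fun h => (sub_le_sub_right h b).trans (add_sub_le c b)⟩

theorem sub_le_self (a b : A) : sub a b ≤ a := sub_le_iff_le_add.2 (le_self_add a b)

theorem sub_sub_self_le (a b : A) : sub a (sub a b) ≤ b :=
  sub_le_iff_le_add.2 (add_comm (sub a b) b ▸ le_sub_add a b)

theorem sub_le_add_sub (a b c : A) : sub a c ≤ add (sub a b) (sub b c) := by
  refine sub_le_iff_le_add.2 ?_
  calc a ≤ add (sub a b) b := le_sub_add a b
    _ ≤ add (sub a b) (add (sub b c) c) := add_le_add_left (le_sub_add b c) _
    _ = add (add (sub a b) (sub b c)) c := (add_assoc _ _ _).symm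

theorem le_sup_left (a b : A) : a ≤ sup a b := sup_comm b a ▸ le_add_self a (sub b a)

theorem le_sup_right (a b : A) : b ≤ sup a b := le_add_self b (sub a b)

theorem sup_le {a b c : A} (ha : a ≤ c) (hb : b ≤ c) : sup a b ≤ c := by
  obtain ⟨v, rfl⟩ := le_iff_exists_add.1 hb
  have hsub : sub a b ≤ v := sub_le_iff_le_add.2 (add_comm b v ▸ ha)
  exact add_comm v b ▸ add_le_add_right hsub b

theorem inf_le_left (a b : A) : inf a b ≤ a := by
  simpa only [inf, neg_neg] using neg_le_neg (le_sup_left (neg a) (neg b))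

theorem inf_le_right (a b : A) : inf a b ≤ b := by
  simpa only [inf, neg_neg] using neg_le_neg (le_sup_right (neg a) (neg b))

theorem le_inf {a b c : A} (ha : c ≤ a) (hb : c ≤ b) : c ≤ inf a b := by
  simpa only [inf, neg_neg] using neg_le_neg (sup_le (neg_le_neg ha) (neg_le_neg hb))

theorem le_inf_add {a b c x : A} (ha : x ≤ add a c) (hb : x ≤ add b c) : x ≤ add (inf a b) c :=
  (le_sub_add x c).trans
    (add_le_add_right (le_inf (sub_le_iff_le_add.2 ha) (sub_le_iff_le_add.2 hb)) c)

end Order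

section Ideal

variable {I J K : Set A}

theorem IsIdeal.zero_mem (hI : IsIdeal I) : zero ∈ I := hI.1

theorem IsIdeal.add_mem (hI : IsIdeal I) {a b : A} (ha : a ∈ I) (hb : b ∈ I) : add a b ∈ I :=
  hI.2.1 a b ha hb

theorem IsIdeal.mem_of_le (hI : IsIdeal I) {a b : A} (hb : b ∈ I) (hab : a ≤ b) : a ∈ I :=
  hI.2.2 a b hb hab

theorem mem_gen {x : A} : x ∈ gen I J ↔ ∃ c ∈ I, ∃ d ∈ J, x ≤ add c d := Iff.rfl

theorem isIdeal_iInter {ι : Sort*} {I : ι → Set A} (hI : ∀ i, IsIdeal (I i)) :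
    IsIdeal (⋂ i, I i) := by
  simp only [IsIdeal, Set.mem_iInter]
  exact ⟨fun i => (hI i).zero_mem, fun a b ha hb i => (hI i).add_mem (ha i) (hb i),
    fun a b hb hab i => (hI i).mem_of_le (hb i) hab⟩

theorem isIdeal_gen (hI : IsIdeal I) (hJ : IsIdeal J) : IsIdeal (gen I J) := by
  refine ⟨mem_gen.2 ⟨zero, hI.zero_mem, zero, hJ.zero_mem, zero_le _⟩, ?_, ?_⟩
  · simp only [mem_gen]
    rintro a b ⟨c, hc, d, hd, ha⟩ ⟨c', hc', d', hd', hb⟩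
    refine ⟨add c c', hI.add_mem hc hc', add d d', hJ.add_mem hd hd', ?_⟩
    exact add_add_add_comm c d c' d' ▸ add_le_add ha hb
  · simp only [mem_gen]
    rintro a b ⟨c, hc, d, hd, hb⟩ hab
    exact ⟨c, hc, d, hd, le_trans hab hb⟩

theorem subset_gen_left (hJ : IsIdeal J) : I ⊆ gen I J :=
  fun a ha => mem_gen.2 ⟨a, ha, zero, hJ.zero_mem, (add_zero a).symm ▸ le_rfl⟩

theorem cong_mono (hIJ : I ⊆ J) {x y : A} (h : cong I x y) : cong J x y :=
  ⟨hIJ h.1, hIJ h.2⟩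

theorem IsIdeal.cong_trans (hI : IsIdeal I) {x y z : A} (hxy : cong I x y) (hyz : cong I y z) :
    cong I x z :=
  ⟨hI.mem_of_le (hI.add_mem hxy.1 hyz.1) (sub_le_add_sub x y z),
    hI.mem_of_le (hI.add_mem hyz.2 hxy.2) (sub_le_add_sub z y x)⟩

theorem mem_gen_inter (hI : IsIdeal I) (hK : IsIdeal K) (hJ : IsIdeal J) {x : A}
    (hxI : x ∈ gen I J) (hxK : x ∈ gen K J) : x ∈ gen (I ∩ K) J := by
  obtain ⟨c, hc, d, hd, hx⟩ := mem_gen.1 hxI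
  obtain ⟨c', hc', d', hd', hx'⟩ := mem_gen.1 hxK
  refine mem_gen.2 ⟨inf c c', ⟨hI.mem_of_le hc (inf_le_left c c'), hK.mem_of_le hc' (inf_le_right c c')⟩,
    add d d', hJ.add_mem hd hd', le_inf_add ?_ ?_⟩
  · exact hx.trans (add_le_add_left (le_self_add d d') c)
  · exact hx'.trans (add_le_add_left (le_add_self d' d) c')

theorem mem_gen_biInter {ι : Type*} {I : ι → Set A} (hI : ∀ i, IsIdeal (I i)) (hJ : IsIdeal J)
    {x : A} (s : Finset ι) (hx : ∀ i ∈ s, x ∈ gen (I i) J) : x ∈ gen (⋂ i ∈ s, I i) J := by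
  classical
  induction s using Finset.induction_on with
  | empty =>
    refine mem_gen.2 ⟨neg zero, by simp, zero, hJ.zero_mem, ?_⟩
    exact (le_neg_zero x).trans_eq (add_zero _).symm
  | insert i s _ ih =>
    rw [Finset.set_biInter_insert]
    exact mem_gen_inter (hI i) (isIdeal_iInter fun j => isIdeal_iInter fun _ => hI j) hJ
      (hx i (Finset.mem_insert_self i s)) (ih fun j hj => hx j (Finset.mem_insert_of_mem hj))

theorem mem_gen_iInter {ι : Type*} [Finite ι] {I : ι → Set A} (hI : ∀ i, IsIdeal (I i))
    (hJ : IsIdeal J) {x : A} (hx : ∀ i, x ∈ gen (I i) J) : x ∈ gen (⋂ i, I i) J := by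
  cases nonempty_fintype ι
  simpa using mem_gen_biInter hI hJ Finset.univ fun i _ => hx i

end Ideal

theorem exists_sub_le_of_sub_le_add {x y c d : A} (hxy : sub x y ≤ add c d)
    (hyx : sub y x ≤ add c d) :
    ∃ b, sub b x ≤ c ∧ sub x b ≤ c ∧ sub b y ≤ d ∧ sub y b ≤ d := by
  have hx : x ≤ add (add y d) c :=
    calc x ≤ add (sub x y) y := le_sub_add x y
      _ ≤ add (add c d) y := add_le_add_right hxy y
      _ = add (add y d) c := by rw [add_comm _ y, add_comm c d, add_assoc]
  have hy : y ≤ add (add c x) d :=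
    calc y ≤ add (sub y x) x := le_sub_add y x
      _ ≤ add (add c d) x := add_le_add_right hyx x
      _ = add (add c x) d := add_right_comm c d x
  refine ⟨sup (inf x (add y d)) (sub y d), ?_, ?_, ?_, ?_⟩
  · refine sub_le_iff_le_add.2 (sup_le ((inf_le_left _ _).trans (le_add_self x c)) ?_)
    exact sub_le_iff_le_add.2 hy
  · refine sub_le_iff_le_add.2 ((le_inf_add (le_self_add x c) hx).trans ?_)
    rw [add_comm c]
    exact add_le_add_right (le_sup_left _ _) c
  · refine sub_le_iff_le_add.2 (sup_le ?_ ((sub_le_self y d).trans (le_add_self y d)))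
    exact add_comm y d ▸ inf_le_right _ _
  · exact (sub_le_sub_left (le_sup_right _ _) y).trans (sub_sub_self_le y d)

theorem exists_cong_cong_of_cong_gen {I J : Set A} (hI : IsIdeal I) (hJ : IsIdeal J) {x y : A}
    (h : cong (gen I J) x y) : ∃ b, cong I b x ∧ cong J b y := by
  obtain ⟨c, hc, d, hd, hcd⟩ := mem_gen.1 ((isIdeal_gen hI hJ).add_mem h.1 h.2)
  obtain ⟨b, hbx, hxb, hby, hyb⟩ :=
    exists_sub_le_of_sub_le_add ((le_self_add _ _).trans hcd) ((le_add_self _ _).trans hcd)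
  exact ⟨b, ⟨hI.mem_of_le hc hbx, hI.mem_of_le hc hxb⟩, ⟨hJ.mem_of_le hd hby, hJ.mem_of_le hd hyb⟩⟩

end MV

open MV in
theorem stmt5 {A : Type*} [MV A] {n : ℕ} {I : Fin n → Set A}
    (hI : ∀ i, IsIdeal (I i)) (a : Fin n → A)
    (h : ∀ i j, cong (gen (I i) (I j)) (a i) (a j)) :
    ∃ b : A, ∀ i, cong (I i) b (a i) := by
  induction n with
  | zero => exact ⟨zero, fun i => i.elim0⟩
  | succ n ih =>
    obtain ⟨b', hb'⟩ := ih (I := fun i => I i.castSucc) (fun i => hI _) (fun i => a i.castSucc)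
      (fun i j => h _ _)
    have hgen (i : Fin n) : cong (gen (I i.castSucc) (I (Fin.last n))) b' (a (Fin.last n)) :=
      (isIdeal_gen (hI _) (hI _)).cong_trans (cong_mono (subset_gen_left (hI _)) (hb' i)) (h _ _)
    have hlast : cong (gen (⋂ i : Fin n, I i.castSucc) (I (Fin.last n))) b' (a (Fin.last n)) :=
      ⟨mem_gen_iInter (fun i => hI _) (hI _) fun i => (hgen i).1,
        mem_gen_iInter (fun i => hI _) (hI _) fun i => (hgen i).2⟩
    obtain ⟨b, hbb', hb⟩ :=
      exists_cong_cong_of_cong_gen (isIdeal_iInter fun i => hI _) (hI _) hlast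
    refine ⟨b, Fin.lastCases hb fun j => ?_⟩
    exact (hI _).cong_trans (cong_mono (Set.iInter_subset _ j) hbb') (hb' j)
end

section
/- McNaughton's theorem: every McNaughton function f : [0,1]ⁿ → [0,1] is an MV term function, i.e., lies in the MV-subalgebra of functions [0,1]ⁿ → [0,1] generated by the coordinate projections. -/
noncomputable section

/-- The unit interval [0,1]. -/
abbrev UI : Type := Set.Icc (0:ℝ) 1

/-- MV sum on [0,1]: x ⊕ y = min(x+y, 1). -/
def oplus (x y : UI) : UI :=
  ⟨min (x.1 + y.1) 1, le_min (add_nonneg x.2.1 y.2.1) zero_le_one, min_le_right _ _⟩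

/-- MV negation on [0,1]: ¬x = 1 - x. -/
def mneg (x : UI) : UI :=
  ⟨1 - x.1, by constructor <;> [linarith [x.2.2]; linarith [x.2.1]]⟩

/-- 0 in [0,1]. -/
def zeroUI : UI := ⟨0, le_refl 0, zero_le_one⟩

/-- Derived x ⊖ y = ¬(¬x ⊕ y). -/
def subUI (x y : UI) : UI := mneg (oplus (mneg x) y)

/-- MV term functions in n variables: the subalgebra of functions [0,1]ⁿ → [0,1]
generated by the coordinate projections. -/
inductive IsTerm (n : ℕ) : ((Fin n → UI) → UI) → Prop
  | proj (i : Fin n) : IsTerm n fun x => x i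
  | zero : IsTerm n fun _ => zeroUI
  | add {f g} : IsTerm n f → IsTerm n g → IsTerm n fun x => oplus (f x) (g x)
  | neg {f} : IsTerm n f → IsTerm n fun x => mneg (f x)

/-- The linear polynomial c₀ + Σ cᵢ xᵢ with integer coefficients. -/
def lin {n : ℕ} (c₀ : ℤ) (c : Fin n → ℤ) (x : Fin n → UI) : ℝ :=
  (c₀ : ℝ) + ∑ i, (c i : ℝ) * (x i).1

/-- Truncation g♯ of a real number to [0,1]. -/
def sharp (r : ℝ) : UI :=
  ⟨max 0 (min r 1), le_max_left _ _, max_le zero_le_one (min_le_right _ _)⟩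

/-!
Truncations `sharp (lin c₀ c)` of integer affine functions are term functions, by induction on the
coefficients through `sharp (u + a) = (sharp u ⊕ a) ⊙ sharp (u + 1)`. Following `f` along the
segment from `x` to `y`, one finds a piece of `f` lying above `f` at `x` and below `f` at `y`.
Hence `f` is the maximum, over the sets `S` of pieces whose minimum lies below `f`, of these
minima: a lattice combination of term functions.
-/

open Set

/-- The Łukasiewicz product, `max (a + b - 1) 0` on reals. -/
def odot (a b : UI) : UI := mneg (oplus (mneg a) (mneg b))

lemma sharp_eq_projIcc : sharp = projIcc 0 1 zero_le_one := by
  funext r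
  exact Subtype.ext (congrArg (max 0) (min_comm r 1))

lemma sharp_coe (a : UI) : sharp a = a := by
  rw [sharp_eq_projIcc, projIcc_of_mem]

lemma continuous_sharp : Continuous sharp := sharp_eq_projIcc ▸ continuous_projIcc

lemma monotone_sharp : Monotone sharp := sharp_eq_projIcc ▸ monotone_projIcc _

lemma sharp_intCast_of_nonpos {m : ℤ} (hm : m ≤ 0) : sharp m = zeroUI := by
  have : (m : ℝ) ≤ 0 := by exact_mod_cast hm
  exact Subtype.ext (max_eq_left ((min_le_left _ _).trans this))

lemma sharp_intCast_of_pos {m : ℤ} (hm : 0 < m) : sharp m = mneg zeroUI := by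
  have : (1 : ℝ) ≤ m := by exact_mod_cast hm
  exact Subtype.ext (by simp [sharp, mneg, zeroUI, min_eq_right this])

lemma sharp_add (u : ℝ) (a : UI) :
    sharp (u + a) = odot (oplus (sharp u) a) (sharp (u + 1)) := by
  obtain ⟨a, ha₀, ha₁⟩ := a
  apply Subtype.ext
  simp only [sharp, odot, oplus, mneg, min_def, max_def]
  split_ifs <;> linarith

lemma sharp_sub (u : ℝ) (a : UI) :
    sharp (u - a) = odot (oplus (sharp (u - 1)) (mneg a)) (sharp u) := by
  have h := sharp_add (u - 1) (mneg a)
  simp only [mneg, sub_add_cancel] at h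
  rwa [show u - 1 + (1 - (a : ℝ)) = u - a by ring] at h

lemma sup_eq_oplus_subUI (a b : UI) : a ⊔ b = oplus (subUI a b) b := by
  obtain ⟨a, ha₀, ha₁⟩ := a
  obtain ⟨b, hb₀, hb₁⟩ := b
  apply Subtype.ext
  change max a b = min (1 - min (1 - a + b) 1 + b) 1
  simp only [min_def, max_def]
  split_ifs <;> linarith

lemma inf_eq_mneg_sup_mneg (a b : UI) : a ⊓ b = mneg (mneg a ⊔ mneg b) := by
  obtain ⟨a, ha₀, ha₁⟩ := a
  obtain ⟨b, hb₀, hb₁⟩ := b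
  apply Subtype.ext
  change min a b = 1 - max (1 - a) (1 - b)
  simp only [min_def, max_def]
  split_ifs <;> linarith

namespace IsTerm

variable {n : ℕ} {f g : (Fin n → UI) → UI}

lemma top : IsTerm n ⊤ := by
  have h : (⊤ : (Fin n → UI) → UI) = fun _ => mneg zeroUI :=
    funext fun _ => Subtype.ext (by simp [mneg, zeroUI])
  exact h ▸ neg zero

lemma odot (hf : IsTerm n f) (hg : IsTerm n g) : IsTerm n fun x => _root_.odot (f x) (g x) :=
  neg (add (neg hf) (neg hg))

lemma sup (hf : IsTerm n f) (hg : IsTerm n g) : IsTerm n (f ⊔ g) := by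
  have h : f ⊔ g = fun x => oplus (subUI (f x) (g x)) (g x) :=
    funext fun x => sup_eq_oplus_subUI (f x) (g x)
  exact h ▸ add (neg (add (neg hf) hg)) hg

lemma inf (hf : IsTerm n f) (hg : IsTerm n g) : IsTerm n (f ⊓ g) := by
  have h : f ⊓ g = fun x => mneg (((fun y => mneg (f y)) ⊔ fun y => mneg (g y)) x) :=
    funext fun x => inf_eq_mneg_sup_mneg (f x) (g x)
  exact h ▸ neg (sup (neg hf) (neg hg))

lemma finset_sup {ι : Type*} {s : Finset ι} {F : ι → (Fin n → UI) → UI}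
    (hF : ∀ i ∈ s, IsTerm n (F i)) : IsTerm n (s.sup F) :=
  Finset.sup_induction zero (fun _ h₁ _ h₂ => sup h₁ h₂) hF

lemma finset_inf {ι : Type*} {s : Finset ι} {F : ι → (Fin n → UI) → UI}
    (hF : ∀ i ∈ s, IsTerm n (F i)) : IsTerm n (s.inf F) :=
  Finset.inf_induction top (fun _ h₁ _ h₂ => inf h₁ h₂) hF

end IsTerm

lemma lin_add_single {n : ℕ} (c₀ : ℤ) (c : Fin n → ℤ) (i : Fin n) (m : ℤ) (x : Fin n → UI) :
    lin c₀ (c + Pi.single i m) x = lin c₀ c x + m * x i := by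
  simp only [lin, Pi.add_apply, Pi.single_apply, Int.cast_add, Int.cast_ite, Int.cast_zero,
    add_mul, ite_mul, zero_mul, Finset.sum_add_distrib, Finset.sum_ite_eq', Finset.mem_univ,
    ↓reduceIte]
  ring

lemma lin_sub_single_one {n : ℕ} (c₀ : ℤ) (c : Fin n → ℤ) (i : Fin n) (x : Fin n → UI) :
    lin c₀ (c - Pi.single i 1) x = lin c₀ c x - x i := by
  simp [sub_eq_add_neg, ← Pi.single_neg, lin_add_single]

lemma lin_add_const {n : ℕ} (c₀ d : ℤ) (c : Fin n → ℤ) (x : Fin n → UI) :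
    lin (c₀ + d) c x = lin c₀ c x + d := by
  simp only [lin]; push_cast; ring

lemma lin_zero {n : ℕ} (c₀ : ℤ) (x : Fin n → UI) : lin c₀ 0 x = c₀ := by
  simp [lin]

section SharpLin

variable {n : ℕ}

lemma isTerm_sharp_intCast (m : ℤ) : IsTerm n fun _ => sharp m := by
  rcases le_or_gt m 0 with hm | hm
  · rw [sharp_intCast_of_nonpos hm]; exact .zero
  · rw [sharp_intCast_of_pos hm]; exact .neg .zero

lemma isTerm_sharp_lin_add_single {c : Fin n → ℤ}
    (hc : ∀ c₀, IsTerm n fun x => sharp (lin c₀ c x)) (i : Fin n) (m c₀ : ℤ) :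
    IsTerm n fun x => sharp (lin c₀ (c + Pi.single i m) x) := by
  induction m using Int.induction_on generalizing c₀ with
  | zero => simpa using hc c₀
  | succ m ih =>
    have h : (fun x => sharp (lin c₀ (c + Pi.single i ((m : ℤ) + 1)) x)) = fun x =>
        odot (oplus (sharp (lin c₀ (c + Pi.single i (m : ℤ)) x)) (x i))
          (sharp (lin (c₀ + 1) (c + Pi.single i (m : ℤ)) x)) := by
      funext x
      rw [Pi.single_add, ← add_assoc, lin_add_single, Int.cast_one, one_mul, sharp_add,
        lin_add_const, Int.cast_one]
    exact h ▸ ((ih c₀).add (.proj i)).odot (ih (c₀ + 1))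
  | pred m ih =>
    have h : (fun x => sharp (lin c₀ (c + Pi.single i (-(m : ℤ) - 1)) x)) = fun x =>
        odot (oplus (sharp (lin (c₀ - 1) (c + Pi.single i (-(m : ℤ))) x)) (mneg (x i)))
          (sharp (lin c₀ (c + Pi.single i (-(m : ℤ))) x)) := by
      funext x
      rw [Pi.single_sub, ← add_sub_assoc, lin_sub_single_one, sharp_sub, sub_eq_add_neg c₀,
        lin_add_const, Int.cast_neg, Int.cast_one, ← sub_eq_add_neg]
    exact h ▸ ((ih (c₀ - 1)).add (.neg (.proj i))).odot (ih c₀)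

lemma isTerm_sharp_lin (c₀ : ℤ) (c : Fin n → ℤ) : IsTerm n fun x => sharp (lin c₀ c x) := by
  classical
  suffices h : ∀ s : Finset (Fin n), ∀ c₀,
      IsTerm n fun x => sharp (lin c₀ (∑ i ∈ s, Pi.single i (c i)) x) by
    simpa only [Finset.univ_sum_single] using h Finset.univ c₀
  intro s
  induction s using Finset.induction_on with
  | empty => simpa only [Finset.sum_empty, lin_zero] using isTerm_sharp_intCast
  | insert i s hi ih =>
    simpa only [Finset.sum_insert hi, add_comm (Pi.single i (c i) : Fin n → ℤ)] using
      isTerm_sharp_lin_add_single ih i (c i)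

end SharpLin

lemma exists_mem_closure_inter_of_subset_iUnion {X ι : Type*} [TopologicalSpace X] [Finite ι]
    {S : Set X} {Z : ι → Set X} {x : X} (hx : x ∈ closure S) (hS : S ⊆ ⋃ j, Z j) :
    ∃ j, x ∈ closure (S ∩ Z j) := by
  rw [← inter_eq_left.2 hS, inter_iUnion, closure_iUnion_of_finite] at hx
  exact mem_iUnion.1 hx

/-- Real induction on the set of times `t` at which some piece starting above `F 0` lies below
`F t`: just right of such a time, `F` follows a single piece `j` at times accumulating there, and if
`j` passes from above the old piece to below it, then `j` started even higher. -/
theorem exists_affine_ge_left_le_right {ι : Type*} [Finite ι] (F : ℝ → ℝ) (hF : Continuous F)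
    (u v : ι → ℝ) (hsel : ∀ t ∈ Icc (0 : ℝ) 1, ∃ j, F t = (1 - t) * u j + t * v j) :
    ∃ j, F 0 ≤ u j ∧ v j ≤ F 1 := by
  let s := {t | ∃ j, F 0 ≤ u j ∧ (1 - t) * u j + t * v j ≤ F t}
  have hs : IsClosed s := by
    have : s = ⋃ j, ⋃ (_ : F 0 ≤ u j), {t | (1 - t) * u j + t * v j ≤ F t} := by
      ext; simp [s]
    rw [this]
    exact isClosed_iUnion_of_finite fun j =>
      isClosed_iUnion_of_finite fun _ => isClosed_le (by fun_prop) hF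
  have h0 : 0 ∈ s := by
    obtain ⟨j, hj⟩ := hsel 0 (left_mem_Icc.2 zero_le_one)
    exact ⟨j, by simp_all⟩
  have step : ∀ x ∈ s ∩ Ico 0 1, ∀ y ∈ Ioi x, (s ∩ Ioc x y).Nonempty := by
    rintro x ⟨⟨i, hi₀, hix⟩, hx₀, hx₁⟩ y hxy
    have hxy' : x < min y 1 := lt_min hxy hx₁
    obtain ⟨j, hj⟩ := exists_mem_closure_inter_of_subset_iUnion
      (S := Ioc x (min y 1)) (Z := fun j => {t | F t = (1 - t) * u j + t * v j})
      (by rw [closure_Ioc hxy'.ne]; exact left_mem_Icc.2 hxy'.le)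
      (fun t ht => mem_iUnion.2 (hsel t ⟨hx₀.trans ht.1.le, ht.2.trans (min_le_right _ _)⟩))
    have hjx : F x = (1 - x) * u j + x * v j :=
      closure_minimal inter_subset_right (isClosed_eq hF (by fun_prop)) hj
    obtain ⟨t, ⟨hxt, hty⟩, hjt⟩ := closure_nonempty_iff.1 ⟨x, hj⟩
    refine ⟨t, ?_, hxt, hty.trans (min_le_left _ _)⟩
    by_cases hit : (1 - t) * u i + t * v i ≤ F t
    · exact ⟨i, hi₀, hit⟩
    · refine ⟨j, hi₀.trans ?_, hjt.ge⟩
      have hjt : F t = (1 - t) * u j + t * v j := hjt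
      nlinarith [mul_nonneg (hx₀.trans hxt.le) (sub_nonneg.2 (hix.trans hjx.le)),
        mul_nonneg hx₀ (sub_nonneg.2 (hjt.symm.trans_lt (not_le.1 hit)).le), sub_pos.2 hxt]
  obtain ⟨j, hj₀, hj₁⟩ := (hs.inter isClosed_Icc).Icc_subset_of_forall_exists_gt h0 step
    (right_mem_Icc.2 zero_le_one)
  exact ⟨j, hj₀, by simpa using hj₁⟩

section Segment

variable {n : ℕ}

/-- The segment from `x` to `y`, made constant outside `t ∈ [0, 1]` by `sharp` so that it is
defined and continuous on all of `ℝ`. -/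
def lineMapUI (x y : Fin n → UI) (t : ℝ) : Fin n → UI :=
  fun i => sharp ((1 - t) * x i + t * y i)

lemma continuous_lineMapUI (x y : Fin n → UI) : Continuous (lineMapUI x y) :=
  continuous_pi fun _ => continuous_sharp.comp (by fun_prop)

lemma lineMapUI_zero (x y : Fin n → UI) : lineMapUI x y 0 = x :=
  funext fun i => by simpa [lineMapUI] using sharp_coe (x i)

lemma lineMapUI_one (x y : Fin n → UI) : lineMapUI x y 1 = y :=
  funext fun i => by simpa [lineMapUI] using sharp_coe (y i)

lemma lin_lineMapUI (c₀ : ℤ) (c : Fin n → ℤ) (x y : Fin n → UI) {t : ℝ} (ht : t ∈ Icc (0 : ℝ) 1) :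
    lin c₀ c (lineMapUI x y t) = (1 - t) * lin c₀ c x + t * lin c₀ c y := by
  have hmem (i : Fin n) : (1 - t) * x i + t * y i ∈ Icc (0 : ℝ) 1 :=
    convex_Icc (0 : ℝ) 1 (x i).2 (y i).2 (sub_nonneg.2 ht.2) ht.1 (sub_add_cancel 1 t)
  have hsum : ∑ i, (c i : ℝ) * ((1 - t) * x i + t * y i) =
      (1 - t) * ∑ i, (c i : ℝ) * x i + t * ∑ i, (c i : ℝ) * y i := by
    rw [Finset.mul_sum, Finset.mul_sum, ← Finset.sum_add_distrib]
    exact Finset.sum_congr rfl fun i _ => by ring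
  simp only [lin, lineMapUI, sharp_eq_projIcc, projIcc_of_mem _ (hmem _)]
  linear_combination hsum

lemma exists_sharp_lin_ge_le {ι : Type*} [Finite ι] {f : (Fin n → UI) → UI} (hf : Continuous f)
    (c₀ : ι → ℤ) (c : ι → Fin n → ℤ) (hcons : ∀ x, ∃ j, (f x).1 = lin (c₀ j) (c j) x)
    (x y : Fin n → UI) :
    ∃ j, f x ≤ sharp (lin (c₀ j) (c j) x) ∧ sharp (lin (c₀ j) (c j) y) ≤ f y := by
  obtain ⟨j, hx, hy⟩ := exists_affine_ge_left_le_right (fun t => (f (lineMapUI x y t)).1)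
    (continuous_subtype_val.comp (hf.comp (continuous_lineMapUI x y)))
    (fun j => lin (c₀ j) (c j) x) (fun j => lin (c₀ j) (c j) y) fun t ht => by
      obtain ⟨j, hj⟩ := hcons (lineMapUI x y t)
      exact ⟨j, hj.trans (lin_lineMapUI _ _ x y ht)⟩
  simp only [lineMapUI_zero, lineMapUI_one] at hx hy
  exact ⟨j, sharp_coe (f x) ▸ monotone_sharp hx, sharp_coe (f y) ▸ monotone_sharp hy⟩

end Segment

lemma exists_eq_finset_sup_inf {α β ι : Type*} [Lattice β] [BoundedOrder β] [Fintype ι]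
    {f : α → β} {G : ι → α → β} (h : ∀ x y, ∃ j, f x ≤ G j x ∧ G j y ≤ f y) :
    ∃ T : Finset (Finset ι), f = T.sup fun S => S.inf G := by
  classical
  let T := Finset.univ.filter fun S : Finset ι => S.inf G ≤ f
  refine ⟨T, le_antisymm (fun x => ?_) (Finset.sup_le fun S hS => (Finset.mem_filter.1 hS).2)⟩
  let S := Finset.univ.filter fun j => f x ≤ G j x
  have hS : S.inf G ≤ f := fun y => by
    obtain ⟨j, hjx, hjy⟩ := h x y
    exact (Finset.inf_le (f := G) (Finset.mem_filter.2 ⟨Finset.mem_univ j, hjx⟩) y).trans hjy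
  calc f x ≤ S.inf G x := by
        rw [Finset.inf_apply]
        exact Finset.le_inf fun j hj => (Finset.mem_filter.1 hj).2
    _ ≤ _ := Finset.le_sup (s := T) (f := fun S : Finset ι => S.inf G)
        (Finset.mem_filter.2 ⟨Finset.mem_univ S, hS⟩) x

theorem stmt10 (n : ℕ) (f : (Fin n → UI) → UI) (hf : Continuous f)
    (k : ℕ) (c₀ : Fin k → ℤ) (c : Fin k → Fin n → ℤ)
    (hcons : ∀ x, ∃ j : Fin k, (f x).1 = lin (c₀ j) (c j) x) :
    IsTerm n f := by
  obtain ⟨T, rfl⟩ := exists_eq_finset_sup_inf (G := fun j x => sharp (lin (c₀ j) (c j) x))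
    (exists_sharp_lin_ge_le hf c₀ c hcons)
  exact IsTerm.finset_sup fun S _ => IsTerm.finset_inf fun j _ => isTerm_sharp_lin (c₀ j) (c j)
end
end
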